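/- (Deterministic bound on ‖P_T(A_r − B)‖_F, second half of Theorem 1.) Let λ > 0, ε ≥ 0, β > 1, n ≥ 5, and let Ω be a finite multiset of s index pairs from [m]×[n]. Let A_r ∈ ℝ^{m×n} satisfy P_T(A_r) = A_r, and let B ∈ ℝ^{m×n}. Set Γ = 2 s ε²/(m n) + 3 m n r log(2n) λ²/(8s). Assume: (i) (1/2)·⟨R_Ω(A_r − B), A_r − B⟩ + (λ/2)·‖P_{T⊥}(B)‖_* ≤ λ·√(r/(2n))·‖P_T(A_r − B)‖_F + Γ; (ii) the linear map (mn/s)·P_T∘R_Ω∘P_T − P_T on ℝ^{m×n} has operator norm at most 1/2 with respect to the Frobenius norm; (iii) R_Ω has operator norm at most (8/3)·√β·log(n) with respect to the Frobenius norm. Then ‖P_T(A_r − B)‖_F ≤ 4ε + (2 m n λ/s)·√(3 r log(2n)) + 64 log(n)·√(m n β/(6 s))·‖P_{T⊥}(B)‖_F. -/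

import Mathlib

/-!
Write `Z = P_T(A_r − B)` and `W = P_{T⊥}(B)`; since `P_T(A_r) = A_r`, `A_r − B = Z − W`.
Hypothesis (ii), tested against `Z` itself, gives `‖Z‖_F² ≤ (2mn/s)·⟨R_Ω Z, Z⟩`, and (iii)
gives `⟨R_Ω W, W⟩ ≤ (8/3)√β log n · ‖W‖_F²`. Because `⟨R_Ω ·, ·⟩` is positive semidefinite,
Cauchy–Schwarz bounds the cross term of `⟨R_Ω(Z − W), Z − W⟩`, and (i) then becomes a quadratic
inequality in `√⟨R_Ω Z, Z⟩`. Solving it and comparing constants gives the bound.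
-/

open scoped BigOperators
open Matrix
open MeasureTheory

/-- Restored helper (removed from Mathlib): `Aᵀ * A` is Hermitian over a ring with trivial star. -/
theorem Matrix.isHermitian_transpose_mul_self {m n α : Type*} [Fintype m] [NonUnitalCommSemiring α]
    [StarRing α] [TrivialStar α] (A : Matrix m n α) : (Aᵀ * A).IsHermitian := by
  rw [Matrix.IsHermitian, Matrix.conjTranspose_eq_transpose_of_trivial, Matrix.transpose_mul,
    Matrix.transpose_transpose]

namespace MC

variable {m n r s : ℕ}

/-- Trace inner product `⟨X,Y⟩ = trace(Xᵀ Y)`. -/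
def ip (A B : Matrix (Fin m) (Fin n) ℝ) : ℝ := ∑ i, ∑ j, A i j * B i j

/-- Frobenius norm. -/
noncomputable def fro (A : Matrix (Fin m) (Fin n) ℝ) : ℝ := Real.sqrt (ip A A)

/-- Largest absolute value of an entry. -/
noncomputable def infNorm (A : Matrix (Fin m) (Fin n) ℝ) : ℝ := ⨆ i, ⨆ j, |A i j|

/-- Nuclear norm: sum of singular values. -/
noncomputable def nuclearNorm (A : Matrix (Fin m) (Fin n) ℝ) : ℝ :=
  ∑ j, Real.sqrt ((Matrix.isHermitian_transpose_mul_self A).eigenvalues j)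

/-- Spectral norm: largest singular value. -/
noncomputable def specNorm (A : Matrix (Fin m) (Fin n) ℝ) : ℝ :=
  ⨆ j, Real.sqrt ((Matrix.isHermitian_transpose_mul_self A).eigenvalues j)

/-- Sampling operator for a multiset of index pairs. -/
def RΩ (Ω : Multiset (Fin m × Fin n)) (Z : Matrix (Fin m) (Fin n) ℝ) :
    Matrix (Fin m) (Fin n) ℝ :=
  Matrix.of fun i j => (Ω.count (i, j)) * Z i j

def PT (U : Matrix (Fin m) (Fin r) ℝ) (V : Matrix (Fin n) (Fin r) ℝ)
    (Z : Matrix (Fin m) (Fin n) ℝ) : Matrix (Fin m) (Fin n) ℝ :=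
  U * Uᵀ * Z + Z * (V * Vᵀ) - U * Uᵀ * Z * (V * Vᵀ)

def PTperp (U : Matrix (Fin m) (Fin r) ℝ) (V : Matrix (Fin n) (Fin r) ℝ)
    (Z : Matrix (Fin m) (Fin n) ℝ) : Matrix (Fin m) (Fin n) ℝ :=
  (1 - U * Uᵀ) * Z * (1 - V * Vᵀ)

/-- Objective of nuclear-norm regularized least squares. -/
noncomputable def obj (Ω : Multiset (Fin m × Fin n)) (A : Matrix (Fin m) (Fin n) ℝ)
    (lam : ℝ) (B : Matrix (Fin m) (Fin n) ℝ) : ℝ :=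
  (1 / 2) * (Ω.map fun p => (B p.1 p.2 - A p.1 p.2) ^ 2).sum + lam * nuclearNorm B

/-- Uniform probability measure on index pairs. -/
noncomputable def unifPair (m n : ℕ) : Measure (Fin m × Fin n) :=
  (Fintype.card (Fin m × Fin n) : ENNReal)⁻¹ • Measure.count

/-- Law of `s` i.i.d. uniform index pairs. -/
noncomputable def sampleMeasure (m n s : ℕ) : Measure (Fin s → Fin m × Fin n) :=
  Measure.pi fun _ => unifPair m n

/-- The multiset of sampled indices. -/
def toMS (ω : Fin s → Fin m × Fin n) : Multiset (Fin m × Fin n) :=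
  Multiset.map ω Finset.univ.val

open Real

lemma ip_comm (A B : Matrix (Fin m) (Fin n) ℝ) : ip A B = ip B A := by
  simp only [ip, mul_comm]

lemma ip_add_left (A B C : Matrix (Fin m) (Fin n) ℝ) : ip (A + B) C = ip A C + ip B C := by
  simp only [ip, Matrix.add_apply, add_mul, Finset.sum_add_distrib]

lemma ip_add_right (A B C : Matrix (Fin m) (Fin n) ℝ) : ip A (B + C) = ip A B + ip A C := by
  rw [ip_comm, ip_add_left, ip_comm B, ip_comm C]

lemma ip_sub_left (A B C : Matrix (Fin m) (Fin n) ℝ) : ip (A - B) C = ip A C - ip B C := by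
  simp only [ip, Matrix.sub_apply, sub_mul, Finset.sum_sub_distrib]

lemma ip_sub_right (A B C : Matrix (Fin m) (Fin n) ℝ) : ip A (B - C) = ip A B - ip A C := by
  rw [ip_comm, ip_sub_left, ip_comm B, ip_comm C]

lemma ip_smul_left (c : ℝ) (A B : Matrix (Fin m) (Fin n) ℝ) : ip (c • A) B = c * ip A B := by
  simp only [ip, Matrix.smul_apply, smul_eq_mul, Finset.mul_sum, mul_assoc]

lemma ip_self_nonneg (A : Matrix (Fin m) (Fin n) ℝ) : 0 ≤ ip A A :=
  Finset.sum_nonneg fun _ _ => Finset.sum_nonneg fun _ _ => mul_self_nonneg _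

lemma fro_nonneg (A : Matrix (Fin m) (Fin n) ℝ) : 0 ≤ fro A := sqrt_nonneg _

lemma fro_sq (A : Matrix (Fin m) (Fin n) ℝ) : fro A ^ 2 = ip A A := sq_sqrt (ip_self_nonneg A)

lemma ip_sq_le (A B : Matrix (Fin m) (Fin n) ℝ) : ip A B ^ 2 ≤ ip A A * ip B B := by
  simpa only [ip, ← Fintype.sum_prod_type', sq] using
    Finset.sum_mul_sq_le_sq_mul_sq Finset.univ (fun p : Fin m × Fin n => A p.1 p.2)
      (fun p => B p.1 p.2)

lemma abs_ip_le_fro_mul_fro (A B : Matrix (Fin m) (Fin n) ℝ) : |ip A B| ≤ fro A * fro B :=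
  (abs_le_sqrt (ip_sq_le A B)).trans_eq (sqrt_mul (ip_self_nonneg A) _)

lemma ip_le_mul_sq_of_fro_le {M W : Matrix (Fin m) (Fin n) ℝ} {K : ℝ}
    (h : fro M ≤ K * fro W) : ip M W ≤ K * fro W ^ 2 :=
  calc ip M W ≤ fro M * fro W := (le_abs_self _).trans (abs_ip_le_fro_mul_fro M W)
    _ ≤ K * fro W * fro W := mul_le_mul_of_nonneg_right h (fro_nonneg W)
    _ = K * fro W ^ 2 := by ring

lemma ip_eq_trace (A B : Matrix (Fin m) (Fin n) ℝ) : ip A B = (Aᵀ * B).trace := by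
  simp only [ip, Matrix.trace, Matrix.diag, Matrix.mul_apply, Matrix.transpose_apply]
  exact Finset.sum_comm

lemma ip_mul_left (M : Matrix (Fin m) (Fin m) ℝ) (A B : Matrix (Fin m) (Fin n) ℝ) :
    ip (M * A) B = ip A (Mᵀ * B) := by
  rw [ip_eq_trace, ip_eq_trace, Matrix.transpose_mul, Matrix.mul_assoc]

lemma ip_mul_right (N : Matrix (Fin n) (Fin n) ℝ) (A B : Matrix (Fin m) (Fin n) ℝ) :
    ip (A * N) B = ip A (B * Nᵀ) := by
  rw [ip_eq_trace, ip_eq_trace, Matrix.transpose_mul, Matrix.mul_assoc, Matrix.trace_mul_comm,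
    Matrix.mul_assoc]

lemma nuclearNorm_nonneg (A : Matrix (Fin m) (Fin n) ℝ) : 0 ≤ nuclearNorm A :=
  Finset.sum_nonneg fun _ _ => sqrt_nonneg _

noncomputable def sqrtRΩ (Ω : Multiset (Fin m × Fin n)) (Z : Matrix (Fin m) (Fin n) ℝ) :
    Matrix (Fin m) (Fin n) ℝ :=
  Matrix.of fun i j => √(Ω.count (i, j)) * Z i j

lemma ip_RΩ_eq (Ω : Multiset (Fin m × Fin n)) (X Y : Matrix (Fin m) (Fin n) ℝ) :
    ip (RΩ Ω X) Y = ip (sqrtRΩ Ω X) (sqrtRΩ Ω Y) := by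
  simp only [ip, RΩ, sqrtRΩ, Matrix.of_apply]
  refine Finset.sum_congr rfl fun i _ => Finset.sum_congr rfl fun j _ => ?_
  rw [mul_mul_mul_comm, mul_self_sqrt (Nat.cast_nonneg _), mul_assoc]

lemma sqrtRΩ_sub (Ω : Multiset (Fin m × Fin n)) (X Y : Matrix (Fin m) (Fin n) ℝ) :
    sqrtRΩ Ω (X - Y) = sqrtRΩ Ω X - sqrtRΩ Ω Y := by
  ext i j
  simp only [sqrtRΩ, Matrix.of_apply, Matrix.sub_apply, mul_sub]

lemma ip_RΩ_self_nonneg (Ω : Multiset (Fin m × Fin n)) (X : Matrix (Fin m) (Fin n) ℝ) :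
    0 ≤ ip (RΩ Ω X) X :=
  ip_RΩ_eq Ω X X ▸ ip_self_nonneg _

lemma ip_RΩ_sub_self_ge (Ω : Multiset (Fin m × Fin n)) (X Y : Matrix (Fin m) (Fin n) ℝ) :
    ip (RΩ Ω X) X - 2 * √(ip (RΩ Ω X) X) * √(ip (RΩ Ω Y) Y)
      ≤ ip (RΩ Ω (X - Y)) (X - Y) := by
  simp only [ip_RΩ_eq, sqrtRΩ_sub, ip_sub_left, ip_sub_right,
    ip_comm (sqrtRΩ Ω Y) (sqrtRΩ Ω X)]
  have hcs := (le_abs_self _).trans (abs_ip_le_fro_mul_fro (sqrtRΩ Ω X) (sqrtRΩ Ω Y))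
  have := ip_self_nonneg (sqrtRΩ Ω Y)
  unfold fro at hcs
  linarith

section Projection

variable {r : ℕ} (U : Matrix (Fin m) (Fin r) ℝ) (V : Matrix (Fin n) (Fin r) ℝ)

lemma ip_PT_comm (A B : Matrix (Fin m) (Fin n) ℝ) : ip (PT U V A) B = ip A (PT U V B) := by
  have hP : (U * Uᵀ)ᵀ = U * Uᵀ := by rw [Matrix.transpose_mul, Matrix.transpose_transpose]
  have hQ : (V * Vᵀ)ᵀ = V * Vᵀ := by rw [Matrix.transpose_mul, Matrix.transpose_transpose]
  rw [PT, PT, ip_sub_left, ip_add_left, ip_mul_left _ A, ip_mul_right _ A,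
    ip_mul_right _ (U * Uᵀ * A), ip_mul_left _ A, hP, hQ, ip_sub_right, ip_add_right,
    Matrix.mul_assoc (U * Uᵀ) B]

lemma PT_PT (hU : Uᵀ * U = 1) (hV : Vᵀ * V = 1) (Z : Matrix (Fin m) (Fin n) ℝ) :
    PT U V (PT U V Z) = PT U V Z := by
  have hU' (X : Matrix (Fin m) (Fin r) ℝ) : X * Uᵀ * U = X := by
    rw [Matrix.mul_assoc, hU, Matrix.mul_one]
  have hV' (X : Matrix (Fin m) (Fin r) ℝ) : X * Vᵀ * V = X := by
    rw [Matrix.mul_assoc, hV, Matrix.mul_one]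
  simp only [PT, Matrix.mul_add, Matrix.add_mul, Matrix.mul_sub, Matrix.sub_mul,
    ← Matrix.mul_assoc, hU', hV']
  abel

lemma PT_sub (X Y : Matrix (Fin m) (Fin n) ℝ) : PT U V (X - Y) = PT U V X - PT U V Y := by
  simp only [PT, Matrix.mul_sub, Matrix.sub_mul]
  abel

lemma PTperp_eq_sub (Z : Matrix (Fin m) (Fin n) ℝ) : PTperp U V Z = Z - PT U V Z := by
  simp only [PTperp, PT, Matrix.mul_sub, Matrix.sub_mul, Matrix.one_mul, Matrix.mul_one]
  abel

lemma sub_eq_PT_sub_sub_PTperp {X : Matrix (Fin m) (Fin n) ℝ} (hX : PT U V X = X)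
    (Y : Matrix (Fin m) (Fin n) ℝ) : X - Y = PT U V (X - Y) - PTperp U V Y := by
  rw [PT_sub, hX, PTperp_eq_sub]
  abel

lemma sq_fro_le_two_mul_ip_RΩ {Ω : Multiset (Fin m × Fin n)} {c : ℝ}
    {Z : Matrix (Fin m) (Fin n) ℝ} (hZ : PT U V Z = Z)
    (h : fro (c • PT U V (RΩ Ω Z) - Z) ≤ 1 / 2 * fro Z) :
    fro Z ^ 2 ≤ 2 * c * ip (RΩ Ω Z) Z := by
  have hip : ip (c • PT U V (RΩ Ω Z) - Z) Z = c * ip (RΩ Ω Z) Z - fro Z ^ 2 := by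
    rw [ip_sub_left, ip_smul_left, ip_PT_comm, hZ, fro_sq]
  have hcs := neg_le_of_abs_le (abs_ip_le_fro_mul_fro (c • PT U V (RΩ Ω Z) - Z) Z)
  have := mul_le_mul_of_nonneg_right h (fro_nonneg Z)
  nlinarith

end Projection

lemma one_le_log_of_three_le {x : ℝ} (hx : 3 ≤ x) : 1 ≤ log x := by
  rw [le_log_iff_exp_le (by linarith)]
  linarith [exp_one_lt_d9]

lemma le_two_mul_add_sqrt_of_sq_le {q L G : ℝ} (hL : 0 ≤ L) (hG : 0 ≤ G)
    (h : q ^ 2 ≤ 2 * L * q + G) : q ≤ 2 * L + √G := by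
  by_contra! hq
  nlinarith [sq_sqrt hG, sqrt_nonneg G]

lemma le_sqrt_mul_of_sq_le_of_sq_sub_le {x q p c l G : ℝ} (hc : 0 ≤ c) (hl : 0 ≤ l)
    (hG : 0 ≤ G) (hq : 0 ≤ q) (hp : 0 ≤ p) (hxq : x ^ 2 ≤ 2 * c * q ^ 2)
    (hqx : q ^ 2 - 2 * q * p ≤ 2 * l * x + G) :
    x ≤ √(2 * c) * (2 * (p + l * √(2 * c)) + √G) := by
  set a := √(2 * c)
  have ha : 0 ≤ a := sqrt_nonneg _
  have hx : x ≤ a * q :=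
    calc x ≤ √(2 * c * q ^ 2) := le_sqrt_of_sq_le hxq
      _ = a * q := by rw [sqrt_mul (by positivity), sqrt_sq hq]
  have hq' : q ≤ 2 * (p + l * a) + √G :=
    le_two_mul_add_sqrt_of_sq_le (by positivity) hG
      (by nlinarith [mul_le_mul_of_nonneg_left hx hl])
  exact hx.trans (mul_le_mul_of_nonneg_left hq' ha)

lemma four_mul_sqrt_div_le {n r : ℝ} (hn : 3 ≤ n) (hr : 0 ≤ r) :
    4 * √(r / (2 * n)) ≤ √(3 * r * log (2 * n)) := by
  have hlog := one_le_log_of_three_le (show 3 ≤ 2 * n by linarith)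
  rw [show (4 : ℝ) = √(4 ^ 2) by rw [sqrt_sq (by norm_num)], ← sqrt_mul (by norm_num)]
  refine sqrt_le_sqrt ?_
  rw [← mul_div_assoc, div_le_iff₀ (by positivity)]
  nlinarith [mul_le_mul_of_nonneg_left hlog hr]

lemma sampled_perp_term_le {m n s β p b : ℝ} (hm : 0 ≤ m) (hn : 3 ≤ n) (hs : 0 ≤ s)
    (hβ : 1 ≤ β) (hp : 0 ≤ p) (hb : 0 ≤ b) (hpb : p ^ 2 ≤ 8 / 3 * √β * log n * b ^ 2) :
    √(2 * (m * n / s)) * (2 * p) ≤ 64 * log n * √(m * n * β / (6 * s)) * b := by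
  have hc : 0 ≤ m * n / s := by positivity
  have hlog := one_le_log_of_three_le hn
  have hsqrtβ : √β ≤ β := sqrt_le_iff.mpr ⟨by linarith, by nlinarith⟩
  have key : √β * log n ≤ 32 * (β * log n ^ 2) := by
    nlinarith [mul_le_mul hsqrtβ (show log n ≤ log n ^ 2 by nlinarith) (by linarith)
      (by linarith)]
  rw [← sq_le_sq₀ (by positivity) (by positivity)]
  calc (√(2 * (m * n / s)) * (2 * p)) ^ 2 = 8 * (m * n / s) * p ^ 2 := by
        rw [mul_pow, sq_sqrt (by positivity)]; ring
    _ ≤ 8 * (m * n / s) * (8 / 3 * (√β * log n) * b ^ 2) :=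
        mul_le_mul_of_nonneg_left (by linarith) (by positivity)
    _ ≤ 8 * (m * n / s) * (8 / 3 * (32 * (β * log n ^ 2)) * b ^ 2) := by gcongr
    _ = (64 * log n * √(m * n * β / (6 * s)) * b) ^ 2 := by
        rw [mul_pow, mul_pow, sq_sqrt (by positivity)]; ring

lemma sqrt_mul_sqrt_two_mul_Γ_le {m n s r lam ε : ℝ} (hm : 0 < m) (hn : 3 ≤ n) (hs : 0 < s)
    (hr : 0 ≤ r) (hε : 0 ≤ ε) (hlam : 0 ≤ lam) :
    √(2 * (m * n / s)) *
        √(2 * (2 * s * ε ^ 2 / (m * n) + 3 * m * n * r * log (2 * n) * lam ^ 2 / (8 * s)))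
      ≤ 4 * ε + m * n * lam / s * √(3 * r * log (2 * n)) := by
  have hlog := one_le_log_of_three_le (show 3 ≤ 2 * n by linarith)
  have hprod : 2 * (m * n / s) *
      (2 * (2 * s * ε ^ 2 / (m * n) + 3 * m * n * r * log (2 * n) * lam ^ 2 / (8 * s)))
        = 8 * ε ^ 2 + 3 / 2 * (m * n * lam / s) ^ 2 * (r * log (2 * n)) := by
    field_simp
    ring
  have hT : 0 ≤ m * n * lam / s := by positivity
  have hv : √(3 * r * log (2 * n)) ^ 2 = 3 * r * log (2 * n) := sq_sqrt (by positivity)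
  rw [← sqrt_mul (by positivity), sqrt_le_left (by positivity), hprod]
  nlinarith [mul_nonneg (mul_nonneg hε hT) (sqrt_nonneg (3 * r * log (2 * n))),
    mul_nonneg (sq_nonneg (m * n * lam / s)) (mul_nonneg hr (by linarith : 0 ≤ log (2 * n)))]

theorem le_of_sampling_bounds {m n s r lam ε β x q p b : ℝ} (hm : 0 < m) (hn : 3 ≤ n)
    (hs : 0 ≤ s) (hr : 0 ≤ r) (hlam : 0 ≤ lam) (hε : 0 ≤ ε) (hβ : 1 ≤ β) (hq : 0 ≤ q)
    (hp : 0 ≤ p) (hb : 0 ≤ b) (hxq : x ^ 2 ≤ 2 * (m * n / s) * q ^ 2)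
    (hpb : p ^ 2 ≤ 8 / 3 * √β * log n * b ^ 2)
    (hqx : q ^ 2 - 2 * q * p ≤ 2 * (lam * √(r / (2 * n))) * x +
      2 * (2 * s * ε ^ 2 / (m * n) + 3 * m * n * r * log (2 * n) * lam ^ 2 / (8 * s))) :
    x ≤ 4 * ε + (2 * m * n * lam / s) * √(3 * r * log (2 * n))
      + 64 * log n * √(m * n * β / (6 * s)) * b := by
  rcases hs.eq_or_lt with rfl | hs
  · simp only [div_zero, mul_zero, zero_mul, sqrt_zero, add_zero] at hxq ⊢
    nlinarith
  have hlog := one_le_log_of_three_le (show 3 ≤ 2 * n by linarith)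
  have hc : 0 ≤ m * n / s := by positivity
  have hcore := le_sqrt_mul_of_sq_le_of_sq_sub_le hc (by positivity) (by positivity) hq hp hxq hqx
  have hperp := sampled_perp_term_le hm.le hn hs.le hβ hp hb hpb
  have hΓ := sqrt_mul_sqrt_two_mul_Γ_le hm hn hs hr hε hlam
  have hreg := mul_le_mul_of_nonneg_left (four_mul_sqrt_div_le hn hr)
    (show 0 ≤ m * n * lam / s by positivity)
  have ha : √(2 * (m * n / s)) ^ 2 = 2 * (m * n / s) := sq_sqrt (by positivity)
  calc x ≤ √(2 * (m * n / s)) * (2 * p) + m * n * lam / s * (4 * √(r / (2 * n)))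
        + √(2 * (m * n / s)) *
          √(2 * (2 * s * ε ^ 2 / (m * n) + 3 * m * n * r * log (2 * n) * lam ^ 2 / (8 * s))) :=
        hcore.trans_eq (by linear_combination (2 * lam * √(r / (2 * n))) * ha)
    _ ≤ _ := by
        rw [show 2 * m * n * lam / s = 2 * (m * n * lam / s) by ring]
        linarith

theorem stmt8_general (m n r s : ℕ) (hm : 0 < m) (hn5 : 5 ≤ n)
    (lam : ℝ) (hlam : 0 < lam) (ε : ℝ) (hε : 0 ≤ ε) (β : ℝ) (hβ : 1 < β)
    (U : Matrix (Fin m) (Fin r) ℝ) (V : Matrix (Fin n) (Fin r) ℝ)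
    (hUo : Uᵀ * U = 1) (hVo : Vᵀ * V = 1)
    (Ω : Multiset (Fin m × Fin n))
    (Ar : Matrix (Fin m) (Fin n) ℝ) (hArT : PT U V Ar = Ar)
    (B : Matrix (Fin m) (Fin n) ℝ)
    -- (i): the key inequality from Theorem 4
    (h1 : (1 / 2) * ip (RΩ Ω (Ar - B)) (Ar - B)
            + (lam / 2) * nuclearNorm (PTperp U V B)
          ≤ lam * Real.sqrt (r / (2 * n)) * fro (PT U V (Ar - B))
            + (2 * s * ε ^ 2 / (m * n)
                + 3 * m * n * r * Real.log (2 * n) * lam ^ 2 / (8 * s)))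
    -- (ii): `(mn/s)·P_T∘R_Ω∘P_T − P_T` has Frobenius operator norm at most `1/2`
    (h2 : ∀ Z : Matrix (Fin m) (Fin n) ℝ,
        fro (((m * n : ℝ) / s) • PT U V (RΩ Ω (PT U V Z)) - PT U V Z)
          ≤ (1 / 2) * fro Z)
    -- (iii): `R_Ω` has Frobenius operator norm at most `(8/3)·√β·log n`
    (h3 : ∀ Z : Matrix (Fin m) (Fin n) ℝ,
        fro (RΩ Ω Z) ≤ (8 / 3) * Real.sqrt β * Real.log n * fro Z) :
    fro (PT U V (Ar - B))
      ≤ 4 * ε + (2 * m * n * lam / s) * Real.sqrt (3 * r * Real.log (2 * n))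
        + 64 * Real.log n * Real.sqrt (m * n * β / (6 * s)) * fro (PTperp U V B) := by
  set Z := PT U V (Ar - B)
  set W := PTperp U V B
  have hZ : PT U V Z = Z := PT_PT U V hUo hVo _
  have hq := ip_RΩ_self_nonneg Ω Z
  have hp := ip_RΩ_self_nonneg Ω W
  refine le_of_sampling_bounds (q := √(ip (RΩ Ω Z) Z)) (p := √(ip (RΩ Ω W) W))
    (by positivity) (by exact_mod_cast hn5.trans' (by norm_num))
    s.cast_nonneg r.cast_nonneg hlam.le hε hβ.le (sqrt_nonneg _) (sqrt_nonneg _) (fro_nonneg W)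
    ?_ ?_ ?_
  · rw [sq_sqrt hq]
    exact sq_fro_le_two_mul_ip_RΩ U V hZ (by simpa only [hZ] using h2 Z)
  · rw [sq_sqrt hp]
    exact ip_le_mul_sq_of_fro_le (h3 W)
  · have hsplit := ip_RΩ_sub_self_ge Ω Z W
    rw [← sub_eq_PT_sub_sub_PTperp U V hArT] at hsplit
    rw [sq_sqrt hq]
    linarith [mul_nonneg hlam.le (nuclearNorm_nonneg W)]

/-- deterministic bound on `‖P_T(A_r − B)‖_F`, second half of the
proof of Theorem 1: under hypotheses (i)–(iii) and `n ≥ 5`,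
`‖P_T(A_r − B)‖_F ≤ 4ε + (2mnλ/s)√(3r log(2n)) + 64 log(n)√(mnβ/(6s))‖P_{T⊥}(B)‖_F`. -/
theorem stmt8 (m n r s : ℕ) (hm : 0 < m) (hmn : m ≤ n) (hn5 : 5 ≤ n)
    (lam : ℝ) (hlam : 0 < lam) (ε : ℝ) (hε : 0 ≤ ε) (β : ℝ) (hβ : 1 < β)
    (U : Matrix (Fin m) (Fin r) ℝ) (V : Matrix (Fin n) (Fin r) ℝ)
    (hUo : Uᵀ * U = 1) (hVo : Vᵀ * V = 1)
    (Ω : Multiset (Fin m × Fin n)) (hcard : Ω.card = s)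
    (Ar : Matrix (Fin m) (Fin n) ℝ) (hArT : PT U V Ar = Ar)
    (B : Matrix (Fin m) (Fin n) ℝ)
    -- (i): the key inequality from Theorem 4
    (h1 : (1 / 2) * ip (RΩ Ω (Ar - B)) (Ar - B)
            + (lam / 2) * nuclearNorm (PTperp U V B)
          ≤ lam * Real.sqrt (r / (2 * n)) * fro (PT U V (Ar - B))
            + (2 * s * ε ^ 2 / (m * n)
                + 3 * m * n * r * Real.log (2 * n) * lam ^ 2 / (8 * s)))
    -- (ii): `(mn/s)·P_T∘R_Ω∘P_T − P_T` has Frobenius operator norm at most `1/2`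
    (h2 : ∀ Z : Matrix (Fin m) (Fin n) ℝ,
        fro (((m * n : ℝ) / s) • PT U V (RΩ Ω (PT U V Z)) - PT U V Z)
          ≤ (1 / 2) * fro Z)
    -- (iii): `R_Ω` has Frobenius operator norm at most `(8/3)·√β·log n`
    (h3 : ∀ Z : Matrix (Fin m) (Fin n) ℝ,
        fro (RΩ Ω Z) ≤ (8 / 3) * Real.sqrt β * Real.log n * fro Z) :
    fro (PT U V (Ar - B))
      ≤ 4 * ε + (2 * m * n * lam / s) * Real.sqrt (3 * r * Real.log (2 * n))
        + 64 * Real.log n * Real.sqrt (m * n * β / (6 * s)) * fro (PTperp U V B) :=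
  stmt8_general m n r s hm hn5 lam hlam ε hε β hβ U V hUo hVo Ω Ar hArT B h1 h2 h3

end MC
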